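/- Let f : [0,1] → ℝ satisfy the Hölder condition |f(s) - f(t)| ≤ H|s-t|^α for some α ∈ (0,1] and H < ∞. Then for every x ∈ (0,1) and n ≥ 1, |Bₙ[f](x) - f(x)| ≤ 2H · (2x(1-x)/n)^{α/2} · Γ(α/2). -/

import Mathlib

/-!
Writing `Bₙ[f](x) - f(x) = ∑ bₙ,ᵥ(x) (f(ν/n) - f(x))` with the nonnegative Bernstein weights
`bₙ,ᵥ(x)`, which sum to `1`, the Hölder condition bounds the error by `H ∑ bₙ,ᵥ(x) |ν/n - x|^α`.
Since `α ≤ 2`, the power-mean inequality bounds this weighted mean by the `α/2`-th power of the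
variance `∑ bₙ,ᵥ(x) (ν/n - x)² = x(1-x)/n`. The remaining factor `2 · 2^{α/2} · Γ(α/2)` is at
least `1` because `Γ ≥ 1` on `(0, 1]`.
-/

open Real Finset

noncomputable def bernsteinPoly (n : ℕ) (f : ℝ → ℝ) (x : ℝ) : ℝ :=
  ∑ m ∈ Finset.range (n + 1),
    (n.choose m : ℝ) * f ((m : ℝ) / n) * x ^ m * (1 - x) ^ (n - m)

open Polynomial

-- `1` lies between `s` and `2`, and `Γ 2 = Γ 1 = 1`, so convexity of `Γ` forces `Γ 1 ≤ Γ s`.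
theorem Real.one_le_Gamma_of_le_one {s : ℝ} (hs : 0 < s) (hs1 : s ≤ 1) : 1 ≤ Gamma s := by
  have h2s : 0 < 2 - s := by linarith
  have hmid : (1 / (2 - s)) • s + ((1 - s) / (2 - s)) • (2 : ℝ) = 1 := by
    simp only [smul_eq_mul]; field_simp; ring
  have h := convexOn_Gamma.le_left_of_right_le' (x := s) (y := 2)
    (a := 1 / (2 - s)) (b := (1 - s) / (2 - s)) hs (Set.mem_Ioi.2 two_pos)
    (by positivity) (div_nonneg (by linarith) h2s.le) (by field_simp; ring)
    (by rw [hmid, Gamma_one, Gamma_two])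
  rwa [hmid, Gamma_one] at h

namespace bernsteinPolynomial

theorem eval_nonneg {x : ℝ} (hx : x ∈ Set.Icc (0 : ℝ) 1) (n ν : ℕ) :
    0 ≤ (bernsteinPolynomial ℝ n ν).eval x := by
  obtain ⟨hx0, hx1⟩ := hx
  have : 0 ≤ 1 - x := sub_nonneg.2 hx1
  simp only [bernsteinPolynomial, eval_mul, eval_pow, eval_sub, eval_one, eval_X, eval_natCast]
  positivity

theorem sum_eval (n : ℕ) (x : ℝ) :
    ∑ ν ∈ range (n + 1), (bernsteinPolynomial ℝ n ν).eval x = 1 := by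
  simpa [eval_finsetSum] using congrArg (eval x) (bernsteinPolynomial.sum ℝ n)

theorem sum_eval_mul_sq {n : ℕ} (hn : n ≠ 0) (x : ℝ) :
    ∑ ν ∈ range (n + 1), (bernsteinPolynomial ℝ n ν).eval x * ((ν : ℝ) / n - x) ^ 2
      = x * (1 - x) / n := by
  have h := congrArg (eval x) (bernsteinPolynomial.variance ℝ n)
  simp only [eval_finsetSum, eval_mul, eval_pow, eval_sub, eval_X, eval_one,
    eval_natCast, nsmul_eq_mul] at h
  have hn' : (n : ℝ) ≠ 0 := by exact_mod_cast hn
  calc _ = (∑ ν ∈ range (n + 1), ((n : ℝ) * x - ν) ^ 2 * (bernsteinPolynomial ℝ n ν).eval x)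
          / n ^ 2 := by
        rw [sum_div]; refine sum_congr rfl fun ν _ => ?_; field_simp; ring
    _ = x * (1 - x) / n := by rw [h]; field_simp

end bernsteinPolynomial

theorem bernsteinPoly_eq_sum_eval (n : ℕ) (f : ℝ → ℝ) (x : ℝ) :
    bernsteinPoly n f x = ∑ ν ∈ range (n + 1), (bernsteinPolynomial ℝ n ν).eval x * f (ν / n) := by
  refine sum_congr rfl fun ν _ => ?_
  simp only [bernsteinPolynomial, eval_mul, eval_pow, eval_sub, eval_one, eval_X, eval_natCast]
  ring

theorem Real.sum_mul_abs_rpow_le {ι : Type*} (s : Finset ι) {w z : ι → ℝ}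
    (hw : ∀ i ∈ s, 0 ≤ w i) (hw1 : ∑ i ∈ s, w i = 1) {α : ℝ} (hα : 0 < α) (hα2 : α ≤ 2) :
    ∑ i ∈ s, w i * |z i| ^ α ≤ (∑ i ∈ s, w i * z i ^ 2) ^ (α / 2) := by
  have h := arith_mean_le_rpow_mean s w (fun i => |z i| ^ α) hw hw1
    (fun i _ => rpow_nonneg (abs_nonneg _) α) ((one_le_div hα).2 hα2)
  have hsq : ∀ i, (|z i| ^ α) ^ (2 / α) = z i ^ 2 := fun i => by
    rw [← rpow_mul (abs_nonneg _), mul_div_cancel₀ 2 hα.ne', rpow_two, sq_abs]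
  simpa only [hsq, one_div_div] using h

theorem abs_bernsteinPoly_sub_le {f : ℝ → ℝ} {α H : ℝ} (hα : 0 < α) (hα2 : α ≤ 2) (hH : 0 ≤ H)
    (hf : ∀ s ∈ Set.Icc (0 : ℝ) 1, ∀ t ∈ Set.Icc (0 : ℝ) 1, |f s - f t| ≤ H * |s - t| ^ α)
    {x : ℝ} (hx : x ∈ Set.Icc (0 : ℝ) 1) {n : ℕ} (hn : n ≠ 0) :
    |bernsteinPoly n f x - f x| ≤ H * (x * (1 - x) / n) ^ (α / 2) := by
  set b : ℕ → ℝ := fun ν => (bernsteinPolynomial ℝ n ν).eval x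
  have hb : ∀ ν ∈ range (n + 1), 0 ≤ b ν := fun ν _ => bernsteinPolynomial.eval_nonneg hx n ν
  have hnode : ∀ ν ∈ range (n + 1), (ν : ℝ) / n ∈ Set.Icc (0 : ℝ) 1 := fun ν hν =>
    ⟨by positivity, div_le_one_of_le₀ (by exact_mod_cast mem_range_succ_iff.1 hν) (by positivity)⟩
  have hdiff : bernsteinPoly n f x - f x = ∑ ν ∈ range (n + 1), b ν * (f (ν / n) - f x) := by
    simp only [bernsteinPoly_eq_sum_eval, mul_sub, sum_sub_distrib, ← sum_mul,
      bernsteinPolynomial.sum_eval, one_mul, b]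
  calc |bernsteinPoly n f x - f x|
      ≤ ∑ ν ∈ range (n + 1), b ν * |f (ν / n) - f x| := by
        rw [hdiff]
        refine (abs_sum_le_sum_abs _ _).trans_eq (sum_congr rfl fun ν hν => ?_)
        rw [abs_mul, abs_of_nonneg (hb ν hν)]
    _ ≤ ∑ ν ∈ range (n + 1), b ν * (H * |(ν : ℝ) / n - x| ^ α) :=
        sum_le_sum fun ν hν => mul_le_mul_of_nonneg_left (hf _ (hnode ν hν) x hx) (hb ν hν)
    _ = H * ∑ ν ∈ range (n + 1), b ν * |(ν : ℝ) / n - x| ^ α := by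
        rw [mul_sum]; exact sum_congr rfl fun ν _ => by ring
    _ ≤ H * (x * (1 - x) / n) ^ (α / 2) := by
        gcongr
        rw [← bernsteinPolynomial.sum_eval_mul_sq hn x]
        exact sum_mul_abs_rpow_le _ hb (bernsteinPolynomial.sum_eval n x) hα hα2

theorem bernstein_holder_error_bound
    (f : ℝ → ℝ) (α H : ℝ) (hα : α ∈ Set.Ioc (0 : ℝ) 1) (hH : 0 ≤ H)
    (hHolder : ∀ s ∈ Set.Icc (0 : ℝ) 1, ∀ t ∈ Set.Icc (0 : ℝ) 1,
      |f s - f t| ≤ H * |s - t| ^ α)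
    (x : ℝ) (hx : x ∈ Set.Ioo (0 : ℝ) 1) (n : ℕ) (hn : 1 ≤ n) :
    |bernsteinPoly n f x - f x|
      ≤ 2 * H * (2 * x * (1 - x) / n) ^ (α / 2) * Real.Gamma (α / 2) := by
  obtain ⟨hα0, hα1⟩ := hα
  set v := x * (1 - x) / n
  have hv : 0 ≤ v := div_nonneg (mul_nonneg hx.1.le (by linarith [hx.2])) n.cast_nonneg
  have hconst : 1 ≤ 2 * 2 ^ (α / 2) * Gamma (α / 2) := by
    have h2 : (1 : ℝ) ≤ 2 ^ (α / 2) := one_le_rpow (by norm_num) (by positivity)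
    have hΓ := one_le_Gamma_of_le_one (s := α / 2) (by positivity) (by linarith)
    nlinarith
  calc |bernsteinPoly n f x - f x|
      ≤ H * v ^ (α / 2) :=
        abs_bernsteinPoly_sub_le hα0 (by linarith) hH hHolder (Set.Ioo_subset_Icc_self hx)
          (by omega)
    _ ≤ H * v ^ (α / 2) * (2 * 2 ^ (α / 2) * Gamma (α / 2)) :=
        le_mul_of_one_le_right (by positivity) hconst
    _ = 2 * H * (2 * x * (1 - x) / n) ^ (α / 2) * Gamma (α / 2) := by
        rw [show 2 * x * (1 - x) / n = 2 * v by ring, mul_rpow (by norm_num) hv]; ring
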